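/- Let (Ω, ℱ, ν) be a probability space, Θ a measurable parameter space with prior probability measure P, and N ≥ 2, 1 ≤ k ≤ N integers; set q := (k−1)/(N−1) and B := q^{k−1}(1−q)^{N−k} · N!/((k−1)!(N−k)!). Let L : Θ × Ω → [0,1] be jointly measurable such that for every θ the law of L(θ, ·) under ν is Beta(k, N+1−k). Fix δ ∈ (0,1) and α ∈ (0,1) with q ≤ α. Then with ν-probability at least 1 − δ over ω, simultaneously every probability measure Q on Θ satisfying KL(Q‖P) ≤ (N−1)·kl(q ‖ α) − log(B/δ) also satisfies ∫_Θ L(θ, ω) dQ(θ) ≤ α. -/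

import Mathlib

/-!
The weight `exp ((N - 1) · kl(q ‖ x))` times the Beta(k, N + 1 - k) density is the constant `B`
on `(0, 1)`, so `exp ((N - 1) · kl(q ‖ L θ))` has `ν`-mean `B` for every `θ`; by Tonelli and
Markov, outside an event of probability `δ` its `P`-average is below `B / δ`. There, fix
`β ∈ (α, 1)` and let `t` be the tangent line of the convex function `kl(q ‖ ·)` at `β`.
Donsker–Varadhan applied to `(N - 1) · t ∘ L ≤ (N - 1) · kl(q ‖ L)` gives
`(N - 1) · t (∫ L dQ) ≤ KL(Q‖P) + log (B / δ) ≤ (N - 1) · kl(q ‖ α) ≤ (N - 1) · t β`,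
and `t` is increasing since `β > q`; hence `∫ L dQ ≤ β`.
-/
open MeasureTheory Real

/-- KL divergence between Bernoulli distributions with success probabilities `p` and `q`
(with the convention `0 * log 0 = 0`, which holds for `Real.log`). -/
noncomputable def bernKL (p q : ℝ) : ℝ :=
  p * Real.log (p / q) + (1 - p) * Real.log ((1 - p) / (1 - q))

open Classical in
/-- Kullback-Leibler divergence between measures: `∫ log (dQ/dP) dQ` when `Q ≪ P`
(and the log-likelihood ratio is integrable), `+∞` otherwise. -/
noncomputable def klDivE {Θ : Type*} [MeasurableSpace Θ] (Q P : Measure Θ) : EReal :=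
  if Q ≪ P ∧ Integrable (llr Q P) Q then ((∫ θ, llr Q P θ ∂Q : ℝ) : EReal) else ⊤

/-- The Beta distribution with integer parameters `(k, N + 1 - k)`, with density
`x^(k-1) (1-x)^(N-k) · N! / ((k-1)! (N-k)!)` on `(0, 1)`. -/
noncomputable def betaIntMeasure (N k : ℕ) : Measure ℝ :=
  volume.withDensity fun x =>
    ENNReal.ofReal <|
      if x ∈ Set.Ioo (0 : ℝ) 1 then
        x ^ (k - 1) * (1 - x) ^ (N - k) *
          ((N.factorial : ℝ) / ((k - 1).factorial * (N - k).factorial))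
      else 0

open Set

lemma mul_log_div_sub_mul_log_div (a : ℝ) {x b : ℝ} (hx : x ≠ 0) (hb : b ≠ 0) :
    a * log (a / x) - a * log (a / b) = a * log (b / x) := by
  rcases eq_or_ne a 0 with rfl | ha
  · simp
  · rw [log_div ha hx, log_div ha hb, log_div hb hx]
    ring

lemma bernKL_sub_bernKL (q : ℝ) {x b : ℝ} (hx0 : x ≠ 0) (hb0 : b ≠ 0) (hx1 : x ≠ 1)
    (hb1 : b ≠ 1) :
    bernKL q x - bernKL q b = q * log (b / x) + (1 - q) * log ((1 - b) / (1 - x)) := by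
  have h₀ := mul_log_div_sub_mul_log_div q hx0 hb0
  have h₁ := mul_log_div_sub_mul_log_div (1 - q) (sub_ne_zero.2 hx1.symm) (sub_ne_zero.2 hb1.symm)
  unfold bernKL
  linarith

@[fun_prop]
lemma measurable_bernKL (q : ℝ) : Measurable (bernKL q) := by
  unfold bernKL
  fun_prop

lemma bernKL_tangent_le {q b x : ℝ} (hq0 : 0 ≤ q) (hq1 : q ≤ 1) (hb : b ∈ Ioo 0 1)
    (hx : x ∈ Ioo 0 1) :
    bernKL q b + (b - q) / (b * (1 - b)) * (x - b) ≤ bernKL q x := by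
  obtain ⟨hb0, hb1⟩ := hb
  obtain ⟨hx0, hx1⟩ := hx
  have hb1' : 0 < 1 - b := by linarith
  have hx1' : 0 < 1 - x := by linarith
  have hlog₀ : 1 - x / b ≤ log (b / x) := by
    simpa using one_sub_inv_le_log_of_pos (div_pos hb0 hx0)
  have hlog₁ : 1 - (1 - x) / (1 - b) ≤ log ((1 - b) / (1 - x)) := by
    simpa using one_sub_inv_le_log_of_pos (div_pos hb1' hx1')
  have hslope : (b - q) / (b * (1 - b)) * (x - b)
      = q * (1 - x / b) + (1 - q) * (1 - (1 - x) / (1 - b)) := by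
    field_simp
    ring
  have := bernKL_sub_bernKL q hx0.ne' hb0.ne' hx1.ne hb1.ne
  linarith [mul_le_mul_of_nonneg_left hlog₀ hq0,
    mul_le_mul_of_nonneg_left hlog₁ (sub_nonneg.2 hq1)]

lemma bernKL_le_bernKL {q a b : ℝ} (hq : 0 ≤ q) (hqa : q ≤ a) (ha : 0 < a) (hab : a ≤ b)
    (hb : b < 1) : bernKL q a ≤ bernKL q b := by
  have hslope : 0 ≤ (a - q) / (a * (1 - a)) * (b - a) :=
    mul_nonneg (div_nonneg (by linarith) (mul_nonneg ha.le (by linarith))) (by linarith)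
  linarith [bernKL_tangent_le hq (by linarith) ⟨ha, by linarith⟩ ⟨by linarith, hb⟩]

lemma exp_nat_mul_log_div_mul_pow (m : ℕ) {x y : ℝ} (hx : 0 < x) (hy : 0 < y ∨ m = 0) :
    exp (m * log (y / x)) * x ^ m = y ^ m := by
  rcases hy with hy | rfl
  · rw [exp_nat_mul, exp_log (div_pos hy hx), div_pow, div_mul_cancel₀ _ (by positivity)]
  · simp

lemma exp_mul_bernKL_mul_pow {m n : ℕ} {q x : ℝ} (hq : ((m : ℝ) + n) * q = m)
    (hx : x ∈ Ioo 0 1) :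
    exp ((m + n) * bernKL q x) * (x ^ m * (1 - x) ^ n) = q ^ m * (1 - q) ^ n := by
  have hq₁ : ((m : ℝ) + n) * (1 - q) = n := by linarith
  have hpos₀ : 0 < q ∨ m = 0 := by
    refine (lt_or_ge 0 q).imp_right fun h => Nat.eq_zero_of_le_zero ?_
    exact_mod_cast hq ▸ mul_nonpos_of_nonneg_of_nonpos (by positivity) h
  have hpos₁ : 0 < 1 - q ∨ n = 0 := by
    refine (lt_or_ge 0 (1 - q)).imp_right fun h => Nat.eq_zero_of_le_zero ?_
    exact_mod_cast hq₁ ▸ mul_nonpos_of_nonneg_of_nonpos (by positivity) h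
  have hsplit : ((m : ℝ) + n) * bernKL q x = m * log (q / x) + n * log ((1 - q) / (1 - x)) := by
    rw [bernKL, mul_add, ← mul_assoc, ← mul_assoc, hq, hq₁]
  rw [hsplit, exp_add, mul_mul_mul_comm, exp_nat_mul_log_div_mul_pow m hx.1 hpos₀,
    exp_nat_mul_log_div_mul_pow n (sub_pos.2 hx.2) hpos₁]

lemma pow_mul_one_sub_pow_pos {m n : ℕ} {q : ℝ} (hq : ((m : ℝ) + n) * q = m) :
    0 < q ^ m * (1 - q) ^ n := by
  rw [← exp_mul_bernKL_mul_pow hq (x := 1 / 2) ⟨by norm_num, by norm_num⟩]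
  positivity

lemma natCast_sub_one_add_natCast_sub_mul {N k : ℕ} (hk1 : 1 ≤ k) (hkN : k ≤ N) {q : ℝ}
    (hq : ((N : ℝ) - 1) * q = k - 1) :
    (((k - 1 : ℕ) : ℝ) + ((N - k : ℕ) : ℝ)) * q = ((k - 1 : ℕ) : ℝ) := by
  push_cast [Nat.cast_sub hk1, Nat.cast_sub hkN]
  linarith

lemma lintegral_exp_bernKL_betaIntMeasure {N k : ℕ} (hk1 : 1 ≤ k) (hkN : k ≤ N) {q : ℝ}
    (hq : ((N : ℝ) - 1) * q = k - 1) :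
    ∫⁻ x, ENNReal.ofReal (exp (((N : ℝ) - 1) * bernKL q x)) ∂betaIntMeasure N k
      = ENNReal.ofReal (q ^ (k - 1) * (1 - q) ^ (N - k) *
          ((N.factorial : ℝ) / ((k - 1).factorial * (N - k).factorial))) := by
  set C : ℝ := (N.factorial : ℝ) / ((k - 1).factorial * (N - k).factorial)
  have hN : (((k - 1 : ℕ) : ℝ) + ((N - k : ℕ) : ℝ)) = (N : ℝ) - 1 := by
    push_cast [Nat.cast_sub hk1, Nat.cast_sub hkN]
    ring
  have hdensity : ∀ x ∈ Ioo (0 : ℝ) 1,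
      ENNReal.ofReal (x ^ (k - 1) * (1 - x) ^ (N - k) * C)
        * ENNReal.ofReal (exp (((N : ℝ) - 1) * bernKL q x))
      = ENNReal.ofReal (q ^ (k - 1) * (1 - q) ^ (N - k) * C) := by
    intro x hx
    have hx0 : 0 < x := hx.1
    have hx1 : 0 < 1 - x := sub_pos.2 hx.2
    rw [← ENNReal.ofReal_mul (by positivity), ← hN, ← exp_mul_bernKL_mul_pow
      (natCast_sub_one_add_natCast_sub_mul hk1 hkN hq) hx]
    ring_nf
  have hmeas : Measurable fun x : ℝ =>
      ENNReal.ofReal (if x ∈ Ioo (0 : ℝ) 1 then x ^ (k - 1) * (1 - x) ^ (N - k) * C else 0) :=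
    ENNReal.measurable_ofReal.comp (Measurable.ite measurableSet_Ioo (by fun_prop) measurable_const)
  rw [betaIntMeasure, lintegral_withDensity_eq_lintegral_mul _ hmeas (by fun_prop)]
  calc _ = ∫⁻ x, (Ioo (0 : ℝ) 1).indicator
        (fun _ => ENNReal.ofReal (q ^ (k - 1) * (1 - q) ^ (N - k) * C)) x := by
        refine lintegral_congr fun x => ?_
        by_cases hx : x ∈ Ioo (0 : ℝ) 1
        · simp only [Pi.mul_apply, if_pos hx, indicator_of_mem hx, hdensity x hx]
        · simp only [Pi.mul_apply, if_neg hx, indicator_of_notMem hx, ENNReal.ofReal_zero,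
            zero_mul]
    _ = _ := by simp [lintegral_indicator_const measurableSet_Ioo]

lemma ae_betaIntMeasure_mem_Ioo (N k : ℕ) : ∀ᵐ x ∂betaIntMeasure N k, x ∈ Ioo (0 : ℝ) 1 := by
  rw [ae_iff, betaIntMeasure, withDensity_apply']
  refine (setLIntegral_congr_fun measurableSet_Ioo.compl fun x hx => ?_).trans lintegral_zero
  simp only [if_neg hx, ENNReal.ofReal_zero]

lemma klDivE_le_coe_iff {Θ : Type*} [MeasurableSpace Θ] {Q P : Measure Θ} {r : ℝ} :
    klDivE Q P ≤ r ↔ Q ≪ P ∧ Integrable (llr Q P) Q ∧ ∫ θ, llr Q P θ ∂Q ≤ r := by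
  unfold klDivE
  split_ifs with h
  · simp [h]
  · simp only [top_le_iff, EReal.coe_ne_top, false_iff]
    tauto

lemma ofReal_one_sub_le_measure_lt {Ω : Type*} [MeasurableSpace Ω] {ν : Measure Ω}
    [IsProbabilityMeasure ν] {F : Ω → ENNReal} (hF : AEMeasurable F ν) {B δ : ℝ} (hB : 0 < B)
    (hδ : 0 < δ) (hFB : ∫⁻ ω, F ω ∂ν ≤ ENNReal.ofReal B) :
    ENNReal.ofReal (1 - δ) ≤ ν {ω | F ω < ENNReal.ofReal (B / δ)} := by
  have hmarkov : ν {ω | ENNReal.ofReal (B / δ) ≤ F ω} ≤ ENNReal.ofReal δ :=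
    calc _ ≤ (∫⁻ ω, F ω ∂ν) / ENNReal.ofReal (B / δ) :=
          meas_ge_le_lintegral_div hF (by positivity) ENNReal.ofReal_ne_top
      _ ≤ ENNReal.ofReal B / ENNReal.ofReal (B / δ) := by gcongr
      _ = ENNReal.ofReal δ := by
          rw [← ENNReal.ofReal_div_of_pos (by positivity)]
          field_simp
  have hcover : 1 ≤ ν {ω | F ω < ENNReal.ofReal (B / δ)}
      + ν {ω | ENNReal.ofReal (B / δ) ≤ F ω} :=
    calc 1 = ν univ := measure_univ.symm
      _ ≤ ν ({ω | F ω < ENNReal.ofReal (B / δ)} ∪ {ω | ENNReal.ofReal (B / δ) ≤ F ω}) :=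
          measure_mono fun ω _ => lt_or_ge (F ω) (ENNReal.ofReal (B / δ))
      _ ≤ _ := measure_union_le _ _
  calc ENNReal.ofReal (1 - δ) = 1 - ENNReal.ofReal δ := by
        rw [ENNReal.ofReal_sub _ hδ.le, ENNReal.ofReal_one]
    _ ≤ 1 - ν {ω | ENNReal.ofReal (B / δ) ≤ F ω} := tsub_le_tsub_left hmarkov 1
    _ ≤ _ := tsub_le_iff_right.2 hcover

lemma ofReal_one_sub_le_measure_lintegral_lt {Ω Θ : Type*} [MeasurableSpace Ω]
    [MeasurableSpace Θ] {ν : Measure Ω} [IsProbabilityMeasure ν] {P : Measure Θ}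
    [IsProbabilityMeasure P] {g : Θ → Ω → ENNReal} (hg : Measurable (Function.uncurry g))
    {B δ : ℝ} (hB : 0 < B) (hδ : 0 < δ) (hgB : ∀ θ, ∫⁻ ω, g θ ω ∂ν ≤ ENNReal.ofReal B) :
    ENNReal.ofReal (1 - δ) ≤ ν {ω | ∫⁻ θ, g θ ω ∂P < ENNReal.ofReal (B / δ)} := by
  have hg' : Measurable (Function.uncurry fun ω θ => g θ ω) := hg.comp measurable_swap
  refine ofReal_one_sub_le_measure_lt hg'.lintegral_prod_right'.aemeasurable hB hδ ?_
  calc ∫⁻ ω, ∫⁻ θ, g θ ω ∂P ∂ν = ∫⁻ θ, ∫⁻ ω, g θ ω ∂ν ∂P :=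
        lintegral_lintegral_swap hg'.aemeasurable
    _ ≤ ∫⁻ _, ENNReal.ofReal B ∂P := lintegral_mono hgB
    _ = ENNReal.ofReal B := by simp

section ChangeOfMeasure

variable {Θ : Type*} [MeasurableSpace Θ] {P Q : Measure Θ} [IsProbabilityMeasure P]
  [IsProbabilityMeasure Q]

lemma integral_le_integral_llr_add_log_integral_exp (hQP : Q ≪ P)
    (hllr : Integrable (llr Q P) Q) {h : Θ → ℝ} (hQh : Integrable h Q)
    (hPh : Integrable (fun θ => exp (h θ)) P) :
    ∫ θ, h θ ∂Q ≤ ∫ θ, llr Q P θ ∂Q + log (∫ θ, exp (h θ) ∂P) := by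
  have := isProbabilityMeasure_tilted hPh
  have hgibbs := InformationTheory.integral_llr_add_sub_measure_univ_nonneg
    (hQP.trans (absolutelyContinuous_tilted hPh)) (integrable_llr_tilted_right hQP hQh hllr hPh)
  rw [integral_llr_tilted_right hQP hQh hPh hllr] at hgibbs
  simp only [probReal_univ] at hgibbs
  linarith

lemma integral_le_of_integral_llr_le_bernKL_of_lt {f : Θ → ℝ} (hf : Measurable f)
    (hfP : ∀ᵐ θ ∂P, f θ ∈ Ioo 0 1) {s q α β c : ℝ} (hs : 0 < s) (hq : 0 ≤ q) (hqα : q ≤ α)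
    (hα : 0 < α) (hαβ : α < β) (hβ : β < 1)
    (hexp : ∫⁻ θ, ENNReal.ofReal (exp (s * bernKL q (f θ))) ∂P ≤ ENNReal.ofReal c)
    (hQP : Q ≪ P) (hllr : Integrable (llr Q P) Q)
    (hKL : ∫ θ, llr Q P θ ∂Q ≤ s * bernKL q α - log c) :
    ∫ θ, f θ ∂Q ≤ β := by
  set slope := (β - q) / (β * (1 - β))
  have hslope : 0 < slope := div_pos (by linarith) (mul_pos (by linarith) (by linarith))
  set a := s * (bernKL q β - slope * β)
  set h : Θ → ℝ := fun θ => a + s * slope * f θ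
  have hfQ : ∀ᵐ θ ∂Q, f θ ∈ Ioo 0 1 := hQP.ae_le hfP
  have hQf : Integrable f Q := by
    refine Integrable.of_bound hf.aestronglyMeasurable 1 (hfQ.mono fun θ hθ => ?_)
    rw [norm_of_nonneg hθ.1.le]
    exact hθ.2.le
  have hQh : Integrable h Q := (integrable_const a).add (hQf.const_mul _)
  have hPh : Integrable (fun θ => exp (h θ)) P := by
    refine Integrable.of_bound (by fun_prop) (exp (a + s * slope)) (hfP.mono fun θ hθ => ?_)
    rw [norm_of_nonneg (exp_pos _).le, exp_le_exp]
    nlinarith [mul_pos hs hslope, hθ.2]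
  have htangent : ∀ᵐ θ ∂P, h θ ≤ s * bernKL q (f θ) := hfP.mono fun θ hθ => by
    have := bernKL_tangent_le hq (by linarith) ⟨by linarith, hβ⟩ hθ
    simp only [h, a]
    nlinarith
  have hmoment : ∫ θ, exp (h θ) ∂P ≤ c := by
    have : ENNReal.ofReal (∫ θ, exp (h θ) ∂P) ≤ ENNReal.ofReal c := by
      rw [ofReal_integral_eq_lintegral_ofReal hPh (ae_of_all _ fun θ => (exp_pos _).le)]
      refine (lintegral_mono_ae (htangent.mono fun θ hθ => ?_)).trans hexp
      exact ENNReal.ofReal_le_ofReal (exp_le_exp.2 hθ)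
    exact (ENNReal.ofReal_le_ofReal_iff'.1 this).resolve_right (integral_exp_pos hPh).not_ge
  have hQh_eq : ∫ θ, h θ ∂Q = a + s * slope * ∫ θ, f θ ∂Q := by
    simp only [h, integral_add (integrable_const a) (hQf.const_mul _), integral_const_mul,
      integral_const, probReal_univ, one_smul]
  have hDV := integral_le_integral_llr_add_log_integral_exp hQP hllr hQh hPh
  have hlog := log_le_log (integral_exp_pos hPh) hmoment
  have hmono := bernKL_le_bernKL hq hqα hα hαβ.le hβ
  by_contra! H
  nlinarith [mul_pos (mul_pos hs hslope) (sub_pos.2 H)]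

lemma integral_le_of_integral_llr_le_bernKL {f : Θ → ℝ} (hf : Measurable f)
    (hfP : ∀ᵐ θ ∂P, f θ ∈ Ioo 0 1) {s q α c : ℝ} (hs : 0 < s) (hq : 0 ≤ q) (hqα : q ≤ α)
    (hα : α ∈ Ioo 0 1)
    (hexp : ∫⁻ θ, ENNReal.ofReal (exp (s * bernKL q (f θ))) ∂P ≤ ENNReal.ofReal c)
    (hQP : Q ≪ P) (hllr : Integrable (llr Q P) Q)
    (hKL : ∫ θ, llr Q P θ ∂Q ≤ s * bernKL q α - log c) :
    ∫ θ, f θ ∂Q ≤ α := by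
  by_contra! H
  obtain ⟨β, hαβ, hβ⟩ := exists_between (lt_min H hα.2)
  obtain ⟨hβf, hβ1⟩ := lt_min_iff.1 hβ
  exact hβf.not_ge (integral_le_of_integral_llr_le_bernKL_of_lt hf hfP hs hq hqα hα.1 hαβ hβ1
    hexp hQP hllr hKL)

end ChangeOfMeasure

theorem kl_budget_beta_miscoverage_guarantee_general
    {Ω Θ : Type*} [MeasurableSpace Ω] [MeasurableSpace Θ]
    (ν : Measure Ω) [IsProbabilityMeasure ν]
    (P : Measure Θ) [IsProbabilityMeasure P]
    (N k : ℕ) (hN : 2 ≤ N) (hk1 : 1 ≤ k) (hkN : k ≤ N)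
    (q : ℝ) (hq : q = ((k : ℝ) - 1) / ((N : ℝ) - 1))
    (B : ℝ)
    (hB : B = q ^ (k - 1) * (1 - q) ^ (N - k) *
      ((N.factorial : ℝ) / ((k - 1).factorial * (N - k).factorial)))
    (L : Θ → Ω → ℝ) (hL : Measurable (Function.uncurry L))
    (hBeta : ∀ θ : Θ, ν.map (L θ) = betaIntMeasure N k)
    (δ : ℝ) (hδ : δ ∈ Set.Ioo (0 : ℝ) 1)
    (α : ℝ) (hα : α ∈ Set.Ioo (0 : ℝ) 1) (hqα : q ≤ α) :
    ENNReal.ofReal (1 - δ) ≤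
      ν {ω | ∀ Q : Measure Θ, IsProbabilityMeasure Q →
        klDivE Q P ≤
            ((((N : ℝ) - 1) * bernKL q α - Real.log (B / δ) : ℝ) : EReal) →
          ∫ θ, L θ ω ∂Q ≤ α} := by
  have hs : (0 : ℝ) < N - 1 := by
    have : (2 : ℝ) ≤ N := by exact_mod_cast hN
    linarith
  have hk : (1 : ℝ) ≤ k := by exact_mod_cast hk1
  have hq' : ((N : ℝ) - 1) * q = k - 1 := by
    rw [hq]
    field_simp
  have hq0 : 0 ≤ q := hq ▸ div_nonneg (by linarith) hs.le
  have hB0 : 0 < B := hB ▸ mul_pos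
    (pow_mul_one_sub_pow_pos (natCast_sub_one_add_natCast_sub_mul hk1 hkN hq')) (by positivity)
  have hLθ : ∀ θ, Measurable (L θ) := fun θ => hL.comp measurable_prodMk_left
  have hmoment : ∀ θ, ∫⁻ ω, ENNReal.ofReal (exp ((N - 1) * bernKL q (L θ ω))) ∂ν
      ≤ ENNReal.ofReal B := fun θ => by
    rw [← lintegral_map (f := fun x => ENNReal.ofReal (exp ((N - 1) * bernKL q x))) (by fun_prop)
      (hLθ θ), hBeta θ, lintegral_exp_bernKL_betaIntMeasure hk1 hkN hq', hB]
  have hsupport : ∀ᵐ ω ∂ν, ∀ᵐ θ ∂P, L θ ω ∈ Ioo 0 1 :=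
    (Measure.ae_ae_comm (p := fun θ ω => L θ ω ∈ Ioo 0 1)
      (hL (measurableSet_Ioo (a := 0) (b := 1)))).1 <| ae_of_all _ fun θ =>
      ae_of_ae_map (hLθ θ).aemeasurable (hBeta θ ▸ ae_betaIntMeasure_mem_Ioo N k)
  refine (ofReal_one_sub_le_measure_lintegral_lt (P := P) (by fun_prop) hB0 hδ.1
    hmoment).trans (measure_mono_ae ?_)
  filter_upwards [hsupport] with ω hω hlt Q hQ hbudget
  obtain ⟨hQP, hllr, hKL⟩ := klDivE_le_coe_iff.1 hbudget
  exact integral_le_of_integral_llr_le_bernKL (hL.comp measurable_prodMk_right) hω hs hq0 hqα hα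
    hlt.le hQP hllr hKL

/-- Abstract form of the KL-budget corollary (Corollary 1) for Beta-distributed
miscoverages: every posterior `Q` within the KL budget achieves miscoverage at most `α`. -/
theorem kl_budget_beta_miscoverage_guarantee
    {Ω Θ : Type*} [MeasurableSpace Ω] [MeasurableSpace Θ]
    (ν : Measure Ω) [IsProbabilityMeasure ν]
    (P : Measure Θ) [IsProbabilityMeasure P]
    (N k : ℕ) (hN : 2 ≤ N) (hk1 : 1 ≤ k) (hkN : k ≤ N)
    (q : ℝ) (hq : q = ((k : ℝ) - 1) / ((N : ℝ) - 1))
    (B : ℝ)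
    (hB : B = q ^ (k - 1) * (1 - q) ^ (N - k) *
      ((N.factorial : ℝ) / ((k - 1).factorial * (N - k).factorial)))
    (L : Θ → Ω → ℝ) (hL : Measurable (Function.uncurry L))
    (hL01 : ∀ θ ω, L θ ω ∈ Set.Icc (0 : ℝ) 1)
    (hBeta : ∀ θ : Θ, ν.map (L θ) = betaIntMeasure N k)
    (δ : ℝ) (hδ : δ ∈ Set.Ioo (0 : ℝ) 1)
    (α : ℝ) (hα : α ∈ Set.Ioo (0 : ℝ) 1) (hqα : q ≤ α) :
    ENNReal.ofReal (1 - δ) ≤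
      ν {ω | ∀ Q : Measure Θ, IsProbabilityMeasure Q →
        klDivE Q P ≤
            ((((N : ℝ) - 1) * bernKL q α - Real.log (B / δ) : ℝ) : EReal) →
          ∫ θ, L θ ω ∂Q ≤ α} :=
  kl_budget_beta_miscoverage_guarantee_general ν P N k hN hk1 hkN q hq B hB L hL hBeta δ hδ α hα hqα
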